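/- arXiv:0801.0665 — 5 statements merged into one kernel-verified Lean document; each statement's English description precedes it below -/
import Mathlib

section
/- Let α and β be two positive real numbers such that α/β is irrational, and let d and e be two non-negative integers. Then the set { nα + d·log n − mβ − e·log m : n, m positive integers } is dense in ℝ. -/
open Filter Topology
open scoped Classical

namespace Cobham

def applyWord {A B : Type*} (σ : A → List B) (w : List A) : List B := w.flatMap σ

def iterWord {A : Type*} (σ : A → List A) (n : ℕ) (w : List A) : List A :=
  (applyWord σ)^[n] w

def lengthIter {A : Type*} (σ : A → List A) (n : ℕ) (a : A) : ℕ :=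
  (iterWord σ n [a]).length

def IsSubstitution {A : Type*} (σ : A → List A) : Prop :=
  ∀ a : A, Tendsto (fun n => lengthIter σ n a) atTop atTop

def IsPrefixOfSeq {A : Type*} (w : List A) (x : ℕ → A) : Prop :=
  ∀ i : Fin w.length, w.get i = x i

def seqTake {A : Type*} (x : ℕ → A) (n : ℕ) : List A := List.ofFn (fun i : Fin n => x i)

def IsFixedPoint {A : Type*} (σ : A → List A) (x : ℕ → A) : Prop :=
  ∀ n : ℕ, IsPrefixOfSeq (applyWord σ (seqTake x n)) x

def IsProperFixedPoint {A : Type*} (σ : A → List A) (x : ℕ → A) : Prop :=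
  IsFixedPoint σ x ∧ ∀ a : A, ∃ i : ℕ, x i = a

def incidenceMatrix {A : Type*} [DecidableEq A] (σ : A → List A) : Matrix A A ℝ :=
  fun i j => ((σ j).count i : ℝ)

def IsPrimitiveMatrix {A : Type*} [Fintype A] [DecidableEq A] (M : Matrix A A ℝ) : Prop :=
  ∃ n : ℕ, 0 < n ∧ ∀ i j, 0 < (M ^ n) i j

def IsDominantEigenvalue {A : Type*} [Fintype A] [DecidableEq A] (M : Matrix A A ℝ) (α : ℝ) : Prop :=
  0 ≤ α ∧ Module.End.HasEigenvalue (Matrix.toLin' M) α ∧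
    ∀ μ : ℂ, Module.End.HasEigenvalue (Matrix.toLin' (M.map Complex.ofReal)) μ → ‖μ‖ ≤ α

def IsPerron (α : ℝ) : Prop :=
  IsIntegral ℤ α ∧ 1 ≤ α ∧
    ∀ μ : ℂ, Polynomial.aeval μ (minpoly ℤ α) = 0 → μ ≠ (α : ℂ) → ‖μ‖ < α

def MultIndep (α β : ℝ) : Prop :=
  ∀ k l : ℕ, 0 < k → 0 < l → α ^ k ≠ β ^ l

def IsUltimatelyPeriodic {C : Type*} (x : ℕ → C) : Prop :=
  ∃ p : ℕ, 0 < p ∧ ∃ N : ℕ, ∀ n : ℕ, N ≤ n → x (n + p) = x n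

def IsPeriodic {C : Type*} (x : ℕ → C) : Prop :=
  ∃ p : ℕ, 0 < p ∧ ∀ n : ℕ, x (n + p) = x n

def OccursAt {C : Type*} (w : List C) (x : ℕ → C) (i : ℕ) : Prop :=
  ∀ j : Fin w.length, w.get j = x (i + j)

def OccursInfinitely {C : Type*} (w : List C) (x : ℕ → C) : Prop :=
  ∀ N : ℕ, ∃ i : ℕ, N ≤ i ∧ OccursAt w x i

def BoundedGaps {C : Type*} (w : List C) (x : ℕ → C) : Prop :=
  ∃ g : ℕ, ∀ N : ℕ, ∃ i : ℕ, N ≤ i ∧ i < N + g ∧ OccursAt w x i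

def InLanguage {C : Type*} (w : List C) (x : ℕ → C) : Prop := ∃ i : ℕ, OccursAt w x i

def IsSubstitutiveSeq {C : Type*} (α : ℝ) (x : ℕ → C) : Prop :=
  ∃ (B : Type) (_ : Fintype B) (_ : DecidableEq B) (σ : B → List B) (y : ℕ → B) (φ : B → C),
    IsSubstitution σ ∧ IsProperFixedPoint σ y ∧
      IsDominantEigenvalue (incidenceMatrix σ) α ∧ x = φ ∘ y

def IsPrimitiveSubstitutiveSeq {C : Type*} (α : ℝ) (x : ℕ → C) : Prop :=
  ∃ (B : Type) (_ : Fintype B) (_ : DecidableEq B) (σ : B → List B) (y : ℕ → B) (φ : B → C),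
    IsSubstitution σ ∧ IsPrimitiveMatrix (incidenceMatrix σ) ∧ IsProperFixedPoint σ y ∧
      IsDominantEigenvalue (incidenceMatrix σ) α ∧ x = φ ∘ y

def HasGrowthTypeWith {A : Type*} (σ : A → List A) (a : A) (d : ℕ) (θ : ℝ) (c : ℝ) : Prop :=
  0 < c ∧ 1 ≤ θ ∧
    Tendsto (fun n : ℕ => (lengthIter σ n a : ℝ) / (c * (n : ℝ) ^ d * θ ^ n)) atTop (𝓝 1)

def HasGrowthType {A : Type*} (σ : A → List A) (a : A) (d : ℕ) (θ : ℝ) : Prop :=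
  ∃ c : ℝ, HasGrowthTypeWith σ a d θ c

noncomputable def lambdaSum {A : Type*} (d : A → ℕ) (θ c : A → ℝ) (Θ : ℝ) (D : ℕ)
    (u : List A) : ℝ :=
  (u.map (fun b => if θ b = Θ ∧ d b = D then c b else 0)).sum

def restrictSub {A : Type*} {l : ℕ} (σ : A → List A) (part : A → Fin l) (i : Fin l) :
    {a : A // part a = i} → List {a : A // part a = i} :=
  fun a => (σ a.1).filterMap (fun b => if h : part b = i then some ⟨b, h⟩ else none)

def subMatrix {A : Type*} (M : Matrix A A ℝ) (P : A → Prop) :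
    Matrix {a : A // P a} {a : A // P a} ℝ := fun a b => M a.1 b.1

def SatisfiesC {A : Type*} [DecidableEq A] (σ : A → List A) (l q : ℕ)
    (part : A → Fin l) : Prop :=
  q < l ∧ Function.Surjective part ∧
  (∀ a b : A, a ∈ σ b → part a = part b ∨
      ((part b : ℕ) < q ∧ (part b : ℕ) < (part a : ℕ))) ∧
  (∀ i : Fin l, (i : ℕ) < q →
      (∀ a b : A, part a = i → part b = i → (σ b).count a = 0) ∨
      (∀ a b : A, part a = i → part b = i → 0 < (σ b).count a)) ∧
  (∀ i : Fin l, q ≤ (i : ℕ) → ∀ a b : A, part a = i → part b = i → 0 < (σ b).count a) ∧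
  (∀ i : Fin l, (i : ℕ) < q →
      ∃ j : Fin l, (i : ℕ) < (j : ℕ) ∧ ∃ a b : A, part a = j ∧ part b = i ∧ a ∈ σ b) ∧
  (∀ i : Fin l, (∃ a b : A, part a = i ∧ part b = i ∧ 0 < (σ b).count a) →
      ∃ (a : A) (u : List A), part a = i ∧
        (σ a).filter (fun b => decide (part b = i)) = a :: u ∧
        (u = [] ↔ ((∀ b : A, part b = i → b = a) ∧ (σ a).count a = 1)))

def IsGoodSubstitution {A : Type*} [Fintype A] [DecidableEq A] (σ : A → List A) (α : ℝ) : Prop :=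
  IsSubstitution σ ∧ IsDominantEigenvalue (incidenceMatrix σ) α ∧
    ∃ (l q : ℕ) (part : A → Fin l), SatisfiesC σ l q part ∧
      ∃ i : Fin l, q ≤ (i : ℕ) ∧
        IsDominantEigenvalue (incidenceMatrix (restrictSub σ part i)) α


lemma small_step (α β : ℝ) (hβ : 0 < β) (h : Irrational (α / β)) (ε : ℝ) (hε : 0 < ε) :
    ∃ k l : ℤ, 0 < (k : ℝ) * α + (l : ℝ) * β ∧ (k : ℝ) * α + (l : ℝ) * β < ε := by
  rcases AddSubgroup.dense_or_cyclic (AddSubgroup.closure {α, β}) with hd | ⟨a, ha⟩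
  · have h2 := hd (ε / 2)
    rw [Metric.mem_closure_iff] at h2
    obtain ⟨y, hy, hdist⟩ := h2 (ε / 2) (by linarith)
    rw [Real.dist_eq, abs_lt] at hdist
    have hy' : y ∈ AddSubgroup.closure ({α, β} : Set ℝ) := hy
    rw [AddSubgroup.mem_closure_pair] at hy'
    obtain ⟨k, l, hkl⟩ := hy'
    refine ⟨k, l, ?_, ?_⟩ <;> rw [zsmul_eq_mul, zsmul_eq_mul] at hkl <;> rw [hkl] <;> linarith
  · exfalso
    have hαm : α ∈ AddSubgroup.closure ({α, β} : Set ℝ) :=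
      AddSubgroup.subset_closure (by simp)
    have hβm : β ∈ AddSubgroup.closure ({α, β} : Set ℝ) :=
      AddSubgroup.subset_closure (by simp)
    rw [ha, AddSubgroup.mem_closure_singleton] at hαm hβm
    obtain ⟨p, hp⟩ := hαm
    obtain ⟨q, hq⟩ := hβm
    rw [zsmul_eq_mul] at hp hq
    have ha0 : a ≠ 0 := by rintro rfl; simp at hq; linarith
    have hq0 : (q : ℝ) ≠ 0 := by rintro h0; rw [h0] at hq; simp at hq; linarith
    have : α / β = ((p / q : ℚ) : ℝ) := by
      rw [← hp, ← hq, mul_div_mul_right _ _ ha0]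
      push_cast
      ring
    exact (Rat.not_irrational _) (this ▸ h)

lemma abs_log_sub_log_le {a b c : ℝ} (hc : 0 < c) (hca : c ≤ a) (hcb : c ≤ b) :
    |Real.log a - Real.log b| ≤ |a - b| / c := by
  have key : ∀ x y : ℝ, c ≤ x → c ≤ y → x ≤ y → Real.log y - Real.log x ≤ (y - x) / c := by
    intro x y hx hy hxy
    have hx0 : 0 < x := lt_of_lt_of_le hc hx
    have hy0 : 0 < y := lt_of_lt_of_le hc hy
    have h1 := Real.log_le_sub_one_of_pos (show 0 < y / x by positivity)
    rw [Real.log_div hy0.ne' hx0.ne'] at h1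
    have h2 : y / x - 1 = (y - x) / x := by field_simp
    have h3 : (y - x) / x ≤ (y - x) / c := by
      apply div_le_div_of_nonneg_left (by linarith) hc hx
    linarith
  rcases le_total a b with hab | hab
  · have hl := Real.log_le_log (hc.trans_le hca) hab
    rw [abs_sub_comm, abs_of_nonneg (by linarith), abs_sub_comm a b, abs_of_nonneg (by linarith)]
    exact key a b hca hcb hab
  · have hl := Real.log_le_log (hc.trans_le hcb) hab
    rw [abs_of_nonneg (by linarith), abs_of_nonneg (by linarith)]
    exact key b a hcb hca hab


set_option maxHeartbeats 1000000

/-- density of { nα + d log n − mβ − e log m }. -/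
theorem stmt4 (α β : ℝ) (hα : 0 < α) (hβ : 0 < β) (h : Irrational (α / β)) (d e : ℕ) :
    Dense {r : ℝ | ∃ n m : ℕ, 0 < n ∧ 0 < m ∧
      r = (n : ℝ) * α + (d : ℝ) * Real.log n - (m : ℝ) * β - (e : ℝ) * Real.log m} := by
  rw [Metric.dense_iff]
  intro r ε hε
  obtain ⟨k, l, hδ0, hδε⟩ := small_step α β hβ h (ε / 2) (by linarith)
  set δ : ℝ := (k : ℝ) * α + (l : ℝ) * β with hδdef
  clear_value δ
  set C : ℝ := β + (e : ℝ) * Real.log 2 with hCdef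
  have hlog2 : (0:ℝ) ≤ Real.log 2 := Real.log_nonneg (by norm_num)
  have hC0 : 0 < C := by positivity
  have hC0' : 0 < C := hC0
  clear_value C
  set J : ℕ := ⌊C / δ⌋₊ + 1 with hJdef
  have hJ1 : 1 ≤ J := by omega
  clear_value J
  set ε' : ℝ := ε / (6 * ((d : ℝ) + e + 1)) with hε'def
  have hε'0 : 0 < ε' := by positivity
  clear_value ε'
  set Jkl : ℕ := J * (k.natAbs + l.natAbs) with hJkldef
  clear_value Jkl
  set N : ℕ := Jkl + 1 + ⌈(Jkl : ℝ) / ε'⌉₊ with hNdef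
  have hN1 : Jkl + 1 ≤ N := by omega
  clear_value N
  have hN1' : ((Jkl : ℝ) + 1) ≤ (N : ℝ) := by exact_mod_cast hN1
  set c : ℝ := (N : ℝ) - Jkl with hcdef
  clear_value c
  have hc1 : 1 ≤ c := by simp only [hcdef]; linarith only [hN1']
  have hc0 : 0 < c := by linarith only [hc1]
  have hkey : (Jkl : ℝ) ≤ ε' * c := by
    have h1 : (Jkl : ℝ) / ε' ≤ (⌈(Jkl : ℝ) / ε'⌉₊ : ℝ) := Nat.le_ceil _
    have h2 : ((Jkl : ℝ) + 1 + (⌈(Jkl : ℝ) / ε'⌉₊ : ℝ)) = (N : ℝ) := by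
      rw [hNdef]; push_cast; ring
    have h3 : (Jkl : ℝ) / ε' ≤ c := by simp only [hcdef]; linarith only [h1, h2]
    calc (Jkl : ℝ) = ε' * ((Jkl : ℝ) / ε') := by field_simp
    _ ≤ ε' * c := by apply mul_le_mul_of_nonneg_left h3 hε'0.le
  -- choose n₀
  set n₀ : ℕ := max N (⌈(r + (N : ℝ) * β + (e : ℝ) * Real.log N) / α⌉₊ + 1) with hn₀def
  have hn₀N : N ≤ n₀ := le_max_left _ _
  have hn₀1 : 1 ≤ n₀ := le_trans (by omega) hn₀N
  have hn₀N' : (N : ℝ) ≤ (n₀ : ℝ) := by exact_mod_cast hn₀N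
  have hn₀α : r + (N : ℝ) * β + (e : ℝ) * Real.log N ≤ (n₀ : ℝ) * α := by
    have h1 : (r + (N : ℝ) * β + (e : ℝ) * Real.log N) / α
        ≤ (⌈(r + (N : ℝ) * β + (e : ℝ) * Real.log N) / α⌉₊ : ℝ) := Nat.le_ceil _
    have h2 : (⌈(r + (N : ℝ) * β + (e : ℝ) * Real.log N) / α⌉₊ + 1 : ℕ) ≤ n₀ := le_max_right _ _
    have h2' : ((⌈(r + (N : ℝ) * β + (e : ℝ) * Real.log N) / α⌉₊ : ℝ) + 1) ≤ (n₀ : ℝ) := by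
      exact_mod_cast h2
    rw [div_le_iff₀ hα] at h1
    have h4 := mul_le_mul_of_nonneg_right h2' hα.le
    linarith only [h1, h4, hα]
  clear_value n₀
  set L : ℝ := (n₀ : ℝ) * α + (d : ℝ) * Real.log n₀ - r with hLdef
  clear_value L
  set g : ℕ → ℝ := fun m => (m : ℝ) * β + (e : ℝ) * Real.log m with hgdef
  clear_value g
  have hlogN : 0 ≤ Real.log N := Real.log_nonneg (by exact_mod_cast (by omega : 1 ≤ N))
  have hlogn₀ : 0 ≤ Real.log n₀ := Real.log_nonneg (by exact_mod_cast hn₀1)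
  have hgN : g N ≤ L := by
    simp only [hgdef, hLdef]
    have h0 : (0:ℝ) ≤ (d : ℝ) * Real.log n₀ := by positivity
    linarith only [hn₀α, h0]
  have hex : ∃ m, N ≤ m ∧ L < g m := by
    refine ⟨max N (⌈L / β⌉₊ + 1), le_max_left _ _, ?_⟩
    set M := max N (⌈L / β⌉₊ + 1) with hMdef
    have hM1 : 1 ≤ M := le_trans (by omega) (le_max_left _ _)
    have hlogM : 0 ≤ Real.log M := Real.log_nonneg (by exact_mod_cast hM1)
    have h1 : L / β ≤ (⌈L / β⌉₊ : ℝ) := Nat.le_ceil _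
    rw [div_le_iff₀ hβ] at h1
    have h2 : (⌈L / β⌉₊ + 1 : ℕ) ≤ M := le_max_right _ _
    have h2' : ((⌈L / β⌉₊ : ℝ) + 1) ≤ (M : ℝ) := by exact_mod_cast h2
    clear_value M
    simp only [hgdef]
    have h3 := mul_le_mul_of_nonneg_right h2' hβ.le
    have h4 : (0:ℝ) ≤ (e : ℝ) * Real.log M := by positivity
    linarith only [h1, h3, h4, hβ]
  set m₁ := Nat.find hex with hm₁def
  have hm₁spec := Nat.find_spec hex
  rw [← hm₁def] at hm₁spec
  clear_value m₁
  have hm₁N : N ≤ m₁ := hm₁spec.1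
  have hm₁ne : m₁ ≠ N := by
    intro hh
    have := hm₁spec.2
    rw [hh] at this
    exact absurd this (not_lt.2 hgN)
  set m₀ := m₁ - 1 with hm₀def
  clear_value m₀
  have hm₀N : N ≤ m₀ := by omega
  have hm₀N' : (N : ℝ) ≤ (m₀ : ℝ) := by exact_mod_cast hm₀N
  have hm₀1 : 1 ≤ m₀ := by omega
  have hm₀1' : (1:ℝ) ≤ (m₀ : ℝ) := by exact_mod_cast hm₀1
  have hm₁eq : m₁ = m₀ + 1 := by omega
  have hgm₀ : g m₀ ≤ L := by
    by_contra hcon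
    push_neg at hcon
    exact Nat.find_min hex (show m₀ < Nat.find hex by omega) ⟨hm₀N, hcon⟩
  have hgap : L - g m₀ < C := by
    have h1 : L < g m₁ := hm₁spec.2
    have h2 : g m₁ - g m₀ ≤ C := by
      rw [hm₁eq]
      simp only [hgdef, hCdef]
      have hlog : Real.log ((m₀ : ℝ) + 1) ≤ Real.log 2 + Real.log m₀ := by
        rw [← Real.log_mul (by norm_num) (by positivity : (m₀:ℝ) ≠ 0)]
        apply Real.log_le_log (by positivity)
        linarith
      have hmul := mul_le_mul_of_nonneg_left hlog (Nat.cast_nonneg (α := ℝ) e)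
      push_cast
      push_cast at hmul
      linarith only [hmul]
    linarith only [h1, h2]
  set f₀ : ℝ := (n₀ : ℝ) * α + (d : ℝ) * Real.log n₀ - (m₀ : ℝ) * β - (e : ℝ) * Real.log m₀
    with hf₀def
  clear_value f₀
  have hf₀r : f₀ - r = L - g m₀ := by simp only [hf₀def, hLdef, hgdef]; ring
  have hf₀0 : 0 ≤ f₀ - r := by rw [hf₀r]; linarith only [hgm₀]
  have hf₀C : f₀ - r < C := by rw [hf₀r]; exact hgap
  set j : ℕ := ⌊(f₀ - r) / δ⌋₊ with hjdef
  clear_value j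
  have hjle : (j : ℝ) * δ ≤ f₀ - r := by
    have h1 := Nat.floor_le (div_nonneg hf₀0 hδ0.le)
    rw [← hjdef] at h1
    calc (j : ℝ) * δ ≤ ((f₀ - r) / δ) * δ := mul_le_mul_of_nonneg_right h1 hδ0.le
    _ = f₀ - r := by field_simp
  have hjgt : f₀ - r < ((j : ℝ) + 1) * δ := by
    have h1 := Nat.lt_floor_add_one ((f₀ - r) / δ)
    rw [← hjdef] at h1
    rw [div_lt_iff₀ hδ0] at h1
    exact_mod_cast h1
  have hjJ : j ≤ J := by
    have h1 : (f₀ - r) / δ ≤ C / δ := (div_le_div_iff_of_pos_right hδ0).2 hf₀C.le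
    have h2 := Nat.floor_le_floor h1
    rw [← hjdef] at h2
    omega
  set n : ℤ := (n₀ : ℤ) - (j : ℤ) * k with hndef
  set m : ℤ := (m₀ : ℤ) + (j : ℤ) * l with hmdef
  clear_value n m
  have hjkn : j * k.natAbs ≤ Jkl := by
    rw [hJkldef]
    calc j * k.natAbs ≤ J * k.natAbs := Nat.mul_le_mul_right _ hjJ
    _ ≤ J * (k.natAbs + l.natAbs) := Nat.mul_le_mul_left _ (Nat.le_add_right _ _)
  have hjln : j * l.natAbs ≤ Jkl := by
    rw [hJkldef]
    calc j * l.natAbs ≤ J * l.natAbs := Nat.mul_le_mul_right _ hjJ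
    _ ≤ J * (k.natAbs + l.natAbs) := Nat.mul_le_mul_left _ (Nat.le_add_left _ _)
  have habsk : ((k.natAbs : ℕ) : ℝ) = |(k : ℝ)| := by rw [Nat.cast_natAbs]; exact Int.cast_abs
  have habsl : ((l.natAbs : ℕ) : ℝ) = |(l : ℝ)| := by rw [Nat.cast_natAbs]; exact Int.cast_abs
  have hjk : |(j : ℝ) * (k : ℝ)| ≤ (Jkl : ℝ) := by
    rw [abs_mul, abs_of_nonneg (by positivity : (0:ℝ) ≤ (j:ℝ)), ← habsk]
    have h1' : ((j * k.natAbs : ℕ) : ℝ) ≤ (Jkl : ℝ) := by exact_mod_cast hjkn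
    push_cast at h1' ⊢
    linarith only [h1']
  have hjl : |(j : ℝ) * (l : ℝ)| ≤ (Jkl : ℝ) := by
    rw [abs_mul, abs_of_nonneg (by positivity : (0:ℝ) ≤ (j:ℝ)), ← habsl]
    have h1' : ((j * l.natAbs : ℕ) : ℝ) ≤ (Jkl : ℝ) := by exact_mod_cast hjln
    push_cast at h1' ⊢
    linarith only [h1']
  have hnval : ((n : ℤ) : ℝ) = (n₀ : ℝ) - (j : ℝ) * (k : ℝ) := by rw [hndef]; push_cast; ring
  have hmval : ((m : ℤ) : ℝ) = (m₀ : ℝ) + (j : ℝ) * (l : ℝ) := by rw [hmdef]; push_cast; ring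
  have hnc : c ≤ ((n : ℤ) : ℝ) := by
    rw [hnval, hcdef]
    linarith only [(abs_le.1 hjk).2, hn₀N']
  have hmc : c ≤ ((m : ℤ) : ℝ) := by
    rw [hmval, hcdef]
    linarith only [(abs_le.1 hjl).1, hm₀N']
  have hn₀c : c ≤ (n₀ : ℝ) := by
    rw [hcdef]
    linarith only [hn₀N', Nat.cast_nonneg (α := ℝ) Jkl]
  have hm₀c : c ≤ (m₀ : ℝ) := by
    rw [hcdef]
    linarith only [hm₀N', Nat.cast_nonneg (α := ℝ) Jkl]
  have hn1 : (1 : ℤ) ≤ n := by exact_mod_cast (show (1:ℝ) ≤ ((n:ℤ):ℝ) by linarith only [hnc, hc1])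
  have hm1 : (1 : ℤ) ≤ m := by exact_mod_cast (show (1:ℝ) ≤ ((m:ℤ):ℝ) by linarith only [hmc, hc1])
  have hntn : ((n.toNat : ℕ) : ℝ) = ((n : ℤ) : ℝ) := by
    rw [← Int.cast_natCast, Int.toNat_of_nonneg (by omega)]
  have hmtn : ((m.toNat : ℕ) : ℝ) = ((m : ℤ) : ℝ) := by
    rw [← Int.cast_natCast, Int.toNat_of_nonneg (by omega)]
  -- log drift bounds
  have hDn : |Real.log ((n:ℤ):ℝ) - Real.log (n₀:ℝ)| ≤ ε' := by
    have h1 := abs_log_sub_log_le hc0 hnc hn₀c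
    have h2 : |((n:ℤ):ℝ) - (n₀:ℝ)| = |(j:ℝ) * (k:ℝ)| := by
      rw [hnval, abs_sub_comm]
      congr 1
      ring
    rw [h2] at h1
    have h3 : |(j:ℝ) * (k:ℝ)| / c ≤ ε' := by
      rw [div_le_iff₀ hc0]
      calc |(j:ℝ) * (k:ℝ)| ≤ (Jkl : ℝ) := hjk
      _ ≤ ε' * c := hkey
    linarith only [h1, h3]
  have hDm : |Real.log ((m:ℤ):ℝ) - Real.log (m₀:ℝ)| ≤ ε' := by
    have h1 := abs_log_sub_log_le hc0 hmc hm₀c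
    have h2 : |((m:ℤ):ℝ) - (m₀:ℝ)| = |(j:ℝ) * (l:ℝ)| := by
      rw [hmval]
      congr 1
      ring
    rw [h2] at h1
    have h3 : |(j:ℝ) * (l:ℝ)| / c ≤ ε' := by
      rw [div_le_iff₀ hc0]
      calc |(j:ℝ) * (l:ℝ)| ≤ (Jkl : ℝ) := hjl
      _ ≤ ε' * c := hkey
    linarith only [h1, h3]
  -- the candidate value
  set F : ℝ := ((n.toNat : ℕ) : ℝ) * α + (d : ℝ) * Real.log (n.toNat : ℕ)
      - ((m.toNat : ℕ) : ℝ) * β - (e : ℝ) * Real.log (m.toNat : ℕ) with hFdef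
  clear_value F
  refine ⟨F, ?_, n.toNat, m.toNat, by omega, by omega, hFdef⟩
  rw [Metric.mem_ball, Real.dist_eq]
  have hFval : F = ((n:ℤ):ℝ) * α + (d : ℝ) * Real.log ((n:ℤ):ℝ)
      - ((m:ℤ):ℝ) * β - (e : ℝ) * Real.log ((m:ℤ):ℝ) := by
    rw [hFdef, hntn, hmtn]
  have hlin : ((n:ℤ):ℝ) * α - ((m:ℤ):ℝ) * β = (n₀:ℝ) * α - (m₀:ℝ) * β - (j:ℝ) * δ := by
    rw [hnval, hmval, hδdef]
    ring
  have hdecomp : F - r = (f₀ - r - (j:ℝ) * δ)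
      + (d : ℝ) * (Real.log ((n:ℤ):ℝ) - Real.log (n₀:ℝ))
      - (e : ℝ) * (Real.log ((m:ℤ):ℝ) - Real.log (m₀:ℝ)) := by
    rw [hFval, hf₀def]
    linarith only [hlin]
  have hde : ((d:ℝ) + e) * ε' ≤ ε / 6 := by
    have heq : ε' * (6 * ((d : ℝ) + e + 1)) = ε := by
      rw [hε'def]; field_simp
    linarith only [heq, hε'0]
  have habs1 : |f₀ - r - (j:ℝ) * δ| < ε / 2 := by
    rw [abs_of_nonneg (by linarith)]
    linarith only [hjgt, hδε]
  have habs2 : |(d : ℝ) * (Real.log ((n:ℤ):ℝ) - Real.log (n₀:ℝ))| ≤ (d:ℝ) * ε' := by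
    rw [abs_mul, abs_of_nonneg (Nat.cast_nonneg _)]
    exact mul_le_mul_of_nonneg_left hDn (Nat.cast_nonneg _)
  have habs3 : |(e : ℝ) * (Real.log ((m:ℤ):ℝ) - Real.log (m₀:ℝ))| ≤ (e:ℝ) * ε' := by
    rw [abs_mul, abs_of_nonneg (Nat.cast_nonneg _)]
    exact mul_le_mul_of_nonneg_left hDm (Nat.cast_nonneg _)
  have htri : |F - r| ≤ |f₀ - r - (j:ℝ) * δ|
      + |(d : ℝ) * (Real.log ((n:ℤ):ℝ) - Real.log (n₀:ℝ))|
      + |(e : ℝ) * (Real.log ((m:ℤ):ℝ) - Real.log (m₀:ℝ))| := by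
    rw [hdecomp]
    calc |f₀ - r - (j:ℝ) * δ + (d : ℝ) * (Real.log ((n:ℤ):ℝ) - Real.log (n₀:ℝ))
        - (e : ℝ) * (Real.log ((m:ℤ):ℝ) - Real.log (m₀:ℝ))|
        ≤ |f₀ - r - (j:ℝ) * δ + (d : ℝ) * (Real.log ((n:ℤ):ℝ) - Real.log (n₀:ℝ))|
          + |(e : ℝ) * (Real.log ((m:ℤ):ℝ) - Real.log (m₀:ℝ))| := abs_sub _ _
    _ ≤ _ := by
        have haa := abs_add_le (f₀ - r - (j:ℝ) * δ)
          ((d : ℝ) * (Real.log ((n:ℤ):ℝ) - Real.log (n₀:ℝ)))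
        linarith only [haa]
  have hfin : ((d:ℝ)) * ε' + (e:ℝ) * ε' ≤ ε / 6 := by linarith only [hde]
  linarith only [htri, habs1, habs2, habs3, hfin, hε]


end Cobham
end

section
/- Let α and β be two multiplicatively independent real numbers greater than 1, and let d and e be two non-negative integers. Then the set { n^d α^n / (m^e β^m) : n, m positive integers } is dense in the positive reals (0, ∞). -/
open Filter Topology
open scoped Classical

namespace Cobham

/-!
Taking logarithms, with `a = log α` and `b = log β`, it suffices that the numbers
`n a + d log n - (m b + e log m)` are dense in `ℝ`. Since `a / b` is irrational, Dirichlet's theorem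
gives `p, q` with `s = p a - q b` nonzero and arbitrarily small; say `s > 0`. Along
`(n, m) = (N + k p, M + k q)` with `N, M` large, consecutive values then differ by roughly `s`:
by at least `s / 2` and by at most `s + ε`. Starting the walk below the target `t`, it must land
within `s + ε` of `t`. The case `s < 0` follows by exchanging the roles of `(α, d)` and `(β, e)`.
-/

open Real

noncomputable def logWeight (a : ℝ) (c : ℕ) (x : ℝ) : ℝ := x * a + c * log x

def logSet (a b : ℝ) (d e : ℕ) : Set ℝ :=
  {x | ∃ n m : ℕ, 0 < n ∧ 0 < m ∧ x = logWeight a d n - logWeight b e m}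

lemma exp_logWeight {γ : ℝ} (hγ : 0 < γ) (c : ℕ) {n : ℕ} (hn : 0 < n) :
    exp (logWeight (log γ) c n) = (n : ℝ) ^ c * γ ^ n := by
  have hn' : (0 : ℝ) < n := by exact_mod_cast hn
  rw [logWeight, exp_add, ← log_pow, ← log_pow, exp_log (by positivity),
    exp_log (by positivity), mul_comm]

lemma logWeight_add_sub_bounds {a x₀ x h : ℝ} (c : ℕ) (hx₀ : 0 < x₀) (hx : x₀ ≤ x) (hh : 0 ≤ h) :
    h * a ≤ logWeight a c (x + h) - logWeight a c x ∧
      logWeight a c (x + h) - logWeight a c x ≤ h * a + c * h / x₀ := by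
  have hx0 : 0 < x := hx₀.trans_le hx
  have hlog_nonneg : 0 ≤ log (x + h) - log x := sub_nonneg.2 (log_le_log hx0 (by linarith))
  have hlog_le : log (x + h) - log x ≤ h / x₀ :=
    calc log (x + h) - log x = log ((x + h) / x) := (log_div (by positivity) hx0.ne').symm
      _ ≤ (x + h) / x - 1 := log_le_sub_one_of_pos (by positivity)
      _ = h / x := by field_simp; ring
      _ ≤ h / x₀ := div_le_div_of_nonneg_left hh hx₀ hx
  have hdiff : logWeight a c (x + h) - logWeight a c x = h * a + c * (log (x + h) - log x) := by
    unfold logWeight; ring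
  rw [hdiff, mul_div_assoc]
  exact ⟨le_add_of_nonneg_right (by positivity),
    add_le_add_right (mul_le_mul_of_nonneg_left hlog_le (by positivity)) _⟩

lemma mul_le_logWeight {a : ℝ} (c : ℕ) {x : ℝ} (hx : 1 ≤ x) : x * a ≤ logWeight a c x :=
  le_add_of_nonneg_right (mul_nonneg (Nat.cast_nonneg c) (log_nonneg hx))

lemma exists_abs_sub_le_of_steps {F : ℕ → ℝ} {t δ ε : ℝ} (hδ : 0 < δ)
    (hlow : ∀ k, F k + δ ≤ F (k + 1)) (hup : ∀ k, F (k + 1) ≤ F k + ε) (h0 : F 0 ≤ t) :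
    ∃ k, |F k - t| ≤ ε := by
  have hlin : ∀ k : ℕ, F 0 + k * δ ≤ F k := by
    intro k
    induction k with
    | zero => simp
    | succ k ih => push_cast; linarith [hlow k]
  have hunb : ∃ k, t < F k := by
    obtain ⟨k, hk⟩ := exists_nat_gt ((t - F 0) / δ)
    refine ⟨k, lt_of_lt_of_le ?_ (hlin k)⟩
    rw [div_lt_iff₀ hδ] at hk
    linarith
  obtain ⟨j, hj⟩ : ∃ j, Nat.find hunb = j + 1 :=
    Nat.exists_eq_succ_of_ne_zero fun hzero => (Nat.find_spec hunb).not_ge (hzero ▸ h0)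
  have hlt : t < F (j + 1) := hj ▸ Nat.find_spec hunb
  have hle : F j ≤ t := not_lt.1 (Nat.find_min hunb (by omega))
  exact ⟨j + 1, abs_le.2 ⟨by linarith [hlow j, hup j], by linarith [hup j]⟩⟩

lemma exists_mem_logSet_abs_sub_le {a b : ℝ} (hb : 0 < b) (d e p q : ℕ)
    (hs : 0 < p * a - q * b) (t : ℝ) {ε : ℝ} (hε : 0 < ε) :
    ∃ x ∈ logSet a b d e, |x - t| ≤ p * a - q * b + ε := by
  set s := (p : ℝ) * a - q * b
  obtain ⟨N, hN0, hN⟩ : ∃ N : ℕ, 0 < N ∧ d * p / ε ≤ N :=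
    ((eventually_gt_atTop 0).and (tendsto_natCast_atTop_atTop.eventually_ge_atTop _)).exists
  obtain ⟨M, hM0, hMs, hMt⟩ : ∃ M : ℕ, 0 < M ∧ e * q / (s / 2) ≤ M ∧
      (logWeight a d N - t) / b ≤ M :=
    ((eventually_gt_atTop 0).and ((tendsto_natCast_atTop_atTop.eventually_ge_atTop _).and
      (tendsto_natCast_atTop_atTop.eventually_ge_atTop _))).exists
  have hN0' : (0 : ℝ) < N := by exact_mod_cast hN0
  have hM0' : (0 : ℝ) < M := by exact_mod_cast hM0
  have hNε : d * p / N ≤ ε := by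
    rw [div_le_iff₀ hN0']; rw [div_le_iff₀ hε] at hN; linarith
  have hMs' : e * q / M ≤ s / 2 := by
    rw [div_le_iff₀ hM0']; rw [div_le_iff₀ (half_pos hs)] at hMs; linarith
  set F : ℕ → ℝ := fun k => logWeight a d ((N + k * p : ℕ) : ℝ) - logWeight b e ((M + k * q : ℕ) : ℝ)
  have hstep : ∀ k, F k + s / 2 ≤ F (k + 1) ∧ F (k + 1) ≤ F k + (s + ε) := by
    intro k
    have hn : ((N + (k + 1) * p : ℕ) : ℝ) = ((N + k * p : ℕ) : ℝ) + p := by push_cast; ring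
    have hm : ((M + (k + 1) * q : ℕ) : ℝ) = ((M + k * q : ℕ) : ℝ) + q := by push_cast; ring
    obtain ⟨hGlow, hGup⟩ := logWeight_add_sub_bounds (a := a) d hN0'
      (show (N : ℝ) ≤ ((N + k * p : ℕ) : ℝ) by exact_mod_cast Nat.le_add_right _ _) p.cast_nonneg
    obtain ⟨hHlow, hHup⟩ := logWeight_add_sub_bounds (a := b) e hM0'
      (show (M : ℝ) ≤ ((M + k * q : ℕ) : ℝ) by exact_mod_cast Nat.le_add_right _ _) q.cast_nonneg
    simp only [F, hn, hm]
    constructor <;> linarith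
  have h0 : F 0 ≤ t := by
    have hMt' := mul_le_logWeight (a := b) e (show (1 : ℝ) ≤ M by exact_mod_cast hM0)
    rw [div_le_iff₀ hb] at hMt
    simp only [F, zero_mul, add_zero]
    linarith
  obtain ⟨k, hk⟩ := exists_abs_sub_le_of_steps (half_pos hs) (fun k => (hstep k).1)
    (fun k => (hstep k).2) h0
  exact ⟨F k, ⟨N + k * p, M + k * q, by positivity, by positivity, rfl⟩, hk⟩

lemma neg_mem_logSet_of_mem_swap {a b x : ℝ} {d e : ℕ} (hx : x ∈ logSet b a e d) :
    -x ∈ logSet a b d e := by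
  obtain ⟨n, m, hn, hm, rfl⟩ := hx
  exact ⟨m, n, hm, hn, by ring⟩

lemma exists_nat_mul_sub_nat_mul_small {a b : ℝ} (ha : 0 < a) (hb : 0 < b)
    (hirr : Irrational (a / b)) {ε : ℝ} (hε : 0 < ε) :
    ∃ p q : ℕ, (p : ℝ) * a - q * b ≠ 0 ∧ |(p : ℝ) * a - q * b| < ε := by
  obtain ⟨n, hn⟩ := exists_nat_gt (b / ε)
  have hn0 : 0 < n := by exact_mod_cast (div_pos hb hε).trans hn
  obtain ⟨k, hk0, -, hk⟩ := exists_nat_abs_mul_sub_round_le (a / b) hn0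
  obtain ⟨q, hq⟩ : ∃ q : ℕ, round (k * (a / b)) = q := Int.eq_ofNat_of_zero_le <| by
    rw [round_eq]; exact Int.floor_nonneg.2 (by positivity)
  rw [hq, Int.cast_natCast] at hk
  have hfactor : (k : ℝ) * a - q * b = b * (k * (a / b) - q) := by field_simp
  have hne : (k : ℝ) * (a / b) - q ≠ 0 :=
    sub_ne_zero.2 (by exact_mod_cast (hirr.natCast_mul hk0.ne').ne_nat q)
  refine ⟨k, q, hfactor ▸ mul_ne_zero hb.ne' hne, ?_⟩
  rw [hfactor, abs_mul, abs_of_pos hb]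
  calc b * |(k : ℝ) * (a / b) - q| ≤ b * (1 / (n + 1)) := by gcongr
    _ < ε := by
      rw [div_lt_iff₀ hε] at hn
      rw [mul_one_div, div_lt_iff₀ (by positivity)]
      nlinarith

lemma dense_logSet {a b : ℝ} (ha : 0 < a) (hb : 0 < b) (hirr : Irrational (a / b)) (d e : ℕ) :
    Dense (logSet a b d e) := by
  refine Metric.dense_iff.2 fun t r hr => ?_
  obtain ⟨p, q, hne, hlt⟩ := exists_nat_mul_sub_nat_mul_small ha hb hirr (half_pos hr)
  rcases hne.lt_or_gt with hneg | hpos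
  · obtain ⟨x, hx, hxt⟩ :=
      exists_mem_logSet_abs_sub_le (a := b) ha e d q p (by linarith) (-t) (half_pos hr)
    refine ⟨-x, ?_, neg_mem_logSet_of_mem_swap hx⟩
    rw [Metric.mem_ball, dist_eq, abs_lt] at *
    constructor <;> linarith [abs_le.1 hxt]
  · obtain ⟨x, hx, hxt⟩ := exists_mem_logSet_abs_sub_le hb d e p q hpos t (half_pos hr)
    refine ⟨x, ?_, hx⟩
    rw [Metric.mem_ball, dist_eq]
    rw [abs_of_pos hpos] at hlt
    linarith

lemma irrational_log_div_log {α β : ℝ} (hα : 1 < α) (hβ : 1 < β) (h : MultIndep α β) :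
    Irrational (log α / log β) := by
  rintro ⟨q, hq⟩
  have hnum : 0 < q.num :=
    Rat.num_pos.2 (by exact_mod_cast hq ▸ div_pos (log_pos hα) (log_pos hβ))
  have hnum' : ((q.num.toNat : ℕ) : ℝ) = q.num := by exact_mod_cast Int.toNat_of_nonneg hnum.le
  apply h q.den q.num.toNat q.den_pos (by omega)
  rw [← exp_log (pow_pos (by linarith) _ : 0 < α ^ q.den),
    ← exp_log (pow_pos (by linarith) _ : 0 < β ^ q.num.toNat), log_pow, log_pow, hnum']
  rw [Rat.cast_def, eq_div_iff (log_pos hβ).ne'] at hq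
  field_simp at hq
  rw [← hq]

/-- density of { n^d α^n / (m^e β^m) } in the positive reals. -/
theorem stmt5 (α β : ℝ) (hα : 1 < α) (hβ : 1 < β) (h : MultIndep α β) (d e : ℕ) :
    ∀ r : ℝ, 0 < r →
      r ∈ closure {s : ℝ | ∃ n m : ℕ, 0 < n ∧ 0 < m ∧
        s = (n : ℝ) ^ d * α ^ n / ((m : ℝ) ^ e * β ^ m)} := by
  intro r hr
  have hdense := dense_logSet (log_pos hα) (log_pos hβ) (irrational_log_div_log hα hβ h) d e
  have himage : exp '' logSet (log α) (log β) d e ⊆ {s : ℝ | ∃ n m : ℕ, 0 < n ∧ 0 < m ∧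
      s = (n : ℝ) ^ d * α ^ n / ((m : ℝ) ^ e * β ^ m)} := by
    rintro _ ⟨x, ⟨n, m, hn, hm, rfl⟩, rfl⟩
    exact ⟨n, m, hn, hm, by
      rw [exp_sub, exp_logWeight (by linarith) d hn, exp_logWeight (by linarith) e hm]⟩
  rw [← exp_log hr]
  exact closure_mono himage <| image_closure_subset_closure_image continuous_exp
    ⟨log r, hdense.closure_eq ▸ Set.mem_univ _, rfl⟩

end Cobham
end

section
/- Let A be a finite index set and M = (m_{a,b})_{a,b∈A} a square matrix with non-negative real entries no column of which is zero. Then there exist a positive integer p, a non-negative integer q, an integer l ≥ q+1, and a partition A₁, …, A_l of A such that, writing N = M^p: (i) for a ∈ A_i and b ∈ A_j, the entry N_{a,b} is zero unless i = j or (j ≤ q and j < i); (ii) for each 1 ≤ i ≤ q the diagonal block of N on A_i × A_i is either the zero matrix or primitive, and for each q+1 ≤ i ≤ l it is primitive; (iii) for every 1 ≤ i ≤ q there exists j with i+1 ≤ j ≤ l such that the block of N with rows indexed by A_j and columns indexed by A_i is not the zero matrix. -/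
open Filter Topology
open scoped Classical

namespace Cobham

section Aux
variable {A : Type} [Fintype A] [DecidableEq A]

-- (paste of aux1 contents assumed; here repeated via include)
lemma pow_apply_nonneg (N : Matrix A A ℝ) (hN : ∀ i j, 0 ≤ N i j) :
    ∀ (n : ℕ) (i j : A), 0 ≤ (N ^ n) i j := by
  intro n
  induction n with
  | zero => intro i j; rw [pow_zero, Matrix.one_apply]; split <;> norm_num
  | succ n ih =>
    intro i j
    rw [pow_succ, Matrix.mul_apply]
    exact Finset.sum_nonneg fun c _ => mul_nonneg (ih i c) (hN c j)

lemma pow_pos_trans {N : Matrix A A ℝ} (hN : ∀ i j, 0 ≤ N i j) {m n : ℕ} {a c b : A}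
    (h1 : 0 < (N ^ m) a c) (h2 : 0 < (N ^ n) c b) : 0 < (N ^ (m + n)) a b := by
  rw [pow_add, Matrix.mul_apply]
  exact Finset.sum_pos'
    (fun x _ => mul_nonneg (pow_apply_nonneg N hN m a x) (pow_apply_nonneg N hN n x b))
    ⟨c, Finset.mem_univ c, mul_pos h1 h2⟩

lemma pow_pos_decomp {N : Matrix A A ℝ} (hN : ∀ i j, 0 ≤ N i j) {m n : ℕ} {a b : A}
    (h : 0 < (N ^ (m + n)) a b) : ∃ c, 0 < (N ^ m) a c ∧ 0 < (N ^ n) c b := by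
  rw [pow_add, Matrix.mul_apply] at h
  obtain ⟨c, -, hc⟩ := Finset.exists_ne_zero_of_sum_ne_zero h.ne'
  have h1 : (N ^ m) a c ≠ 0 := fun h0 => hc (by rw [h0, zero_mul])
  have h2 : (N ^ n) c b ≠ 0 := fun h0 => hc (by rw [h0, mul_zero])
  exact ⟨c, (pow_apply_nonneg N hN m a c).lt_of_ne (Ne.symm h1),
    (pow_apply_nonneg N hN n c b).lt_of_ne (Ne.symm h2)⟩

lemma diag_pow_pos {N : Matrix A A ℝ} (hN : ∀ i j, 0 ≤ N i j) {m : ℕ} {a : A}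
    (h : 0 < (N ^ m) a a) : ∀ k, 0 < (N ^ (m * k)) a a := by
  intro k
  induction k with
  | zero => rw [Nat.mul_zero, pow_zero, Matrix.one_apply_eq]; norm_num
  | succ k ih =>
    rw [show m * (k + 1) = m * k + m by ring]
    exact pow_pos_trans hN ih h

def mreach (N : Matrix A A ℝ) (b a : A) : Prop := ∃ n, 0 < (N ^ n) a b

lemma mreach_refl (N : Matrix A A ℝ) (a : A) : mreach N a a :=
  ⟨0, by rw [pow_zero, Matrix.one_apply_eq]; norm_num⟩

lemma mreach_trans {N : Matrix A A ℝ} (hN : ∀ i j, 0 ≤ N i j) {a b c : A}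
    (h1 : mreach N a b) (h2 : mreach N b c) : mreach N a c := by
  obtain ⟨m, hm⟩ := h1
  obtain ⟨n, hn⟩ := h2
  exact ⟨n + m, pow_pos_trans hN hn hm⟩

lemma mreach_single {N : Matrix A A ℝ} {a b : A} (h : 0 < N a b) : mreach N b a :=
  ⟨1, by rwa [pow_one]⟩

def msetoid (N : Matrix A A ℝ) (hN : ∀ i j, 0 ≤ N i j) : Setoid A :=
  ⟨fun a b => mreach N a b ∧ mreach N b a,
   ⟨fun a => ⟨mreach_refl N a, mreach_refl N a⟩,
    fun h => ⟨h.2, h.1⟩,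
    fun h1 h2 => ⟨mreach_trans hN h1.1 h2.1, mreach_trans hN h2.2 h1.2⟩⟩⟩

lemma primitive_block (N : Matrix A A ℝ) (P : A → Prop)
    [Fintype {c // P c}] [DecidableEq {c // P c}]
    (hN : ∀ i j, 0 ≤ N i j)
    (hmut : ∀ x y, P x → P y → mreach N y x)
    (hclosed : ∀ x y c, P x → P y → mreach N y c → mreach N c x → P c)
    (hdiag : ∀ x, P x → 0 < N x x) :
    IsPrimitiveMatrix (subMatrix N P) := by
  set B := subMatrix N P with hB
  have hBnn : ∀ x y : {c // P c}, 0 ≤ B x y := fun x y => hN x.1 y.1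
  have hstay : ∀ (n : ℕ) (x y : {c // P c}), 0 < (N ^ n) x.1 y.1 → 0 < (B ^ n) x y := by
    intro n
    induction n with
    | zero =>
      intro x y h
      rw [pow_zero] at h ⊢
      have hxy : x.1 = y.1 := by
        by_contra hne
        rw [Matrix.one_apply_ne hne] at h; exact lt_irrefl 0 h
      rw [Subtype.ext hxy, Matrix.one_apply_eq]; norm_num
    | succ n ih =>
      intro x y h
      rw [show n + 1 = 1 + n by omega] at h
      obtain ⟨c, hc1, hc2⟩ := pow_pos_decomp hN h
      have hPc : P c := hclosed x.1 y.1 c x.2 y.2 ⟨n, hc2⟩ ⟨1, hc1⟩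
      have h1 : 0 < (B ^ 1) x ⟨c, hPc⟩ := by
        rw [pow_one] at hc1 ⊢; exact hc1
      have h2 : 0 < (B ^ n) ⟨c, hPc⟩ y := ih ⟨c, hPc⟩ y hc2
      rw [show n + 1 = 1 + n by omega]
      exact pow_pos_trans hBnn h1 h2
  have hconn : ∀ x y : {c // P c}, ∃ n, 0 < (B ^ n) x y := by
    intro x y
    obtain ⟨n, hn⟩ := hmut x.1 y.1 x.2 y.2
    exact ⟨n, hstay n x y hn⟩
  by_cases hne : Nonempty {c // P c}
  · have hBdiag : ∀ x : {c // P c}, 0 < B x x := fun x => hdiag x.1 x.2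
    set nf : {c // P c} × {c // P c} → ℕ := fun z => (hconn z.1 z.2).choose with hnf
    set K := Finset.univ.sup nf with hK
    refine ⟨K + 1, Nat.succ_pos K, fun x y => ?_⟩
    have hn : 0 < (B ^ nf (x, y)) x y := (hconn x y).choose_spec
    have hle : nf (x, y) ≤ K := Finset.le_sup (Finset.mem_univ (x, y))
    have hd : 0 < (B ^ (K + 1 - nf (x, y))) x x := by
      have := diag_pow_pos hBnn (m := 1) (a := x) (by rw [pow_one]; exact hBdiag x) (K + 1 - nf (x, y))
      rwa [one_mul] at this
    have h2 := pow_pos_trans hBnn hd hn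
    rwa [show K + 1 - nf (x, y) + nf (x, y) = K + 1 by omega] at h2
  · exact ⟨1, one_pos, fun x y => absurd ⟨x⟩ hne⟩


lemma structure_lemma [Nonempty A] (N : Matrix A A ℝ) (hN : ∀ i j, 0 ≤ N i j)
    (hcol : ∀ b, ∃ a, 0 < N a b)
    (hloop : ∀ a, (∃ n, 0 < n ∧ 0 < (N ^ n) a a) → 0 < N a a) :
    ∃ (q l : ℕ) (part : A → Fin l), q < l ∧ Function.Surjective part ∧
      (∀ a b, N a b ≠ 0 → part a = part b ∨ ((part b : ℕ) < q ∧ (part b : ℕ) < (part a : ℕ))) ∧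
      (∀ i : Fin l, (i : ℕ) < q →
        (∀ a b : {c : A // part c = i}, N a.1 b.1 = 0) ∨
          IsPrimitiveMatrix (subMatrix N (fun c => part c = i))) ∧
      (∀ i : Fin l, q ≤ (i : ℕ) → IsPrimitiveMatrix (subMatrix N (fun c => part c = i))) ∧
      (∀ i : Fin l, (i : ℕ) < q → ∃ j : Fin l, (i : ℕ) < (j : ℕ) ∧
        ∃ a b, part a = j ∧ part b = i ∧ N a b ≠ 0) := by
  classical
  set S := msetoid N hN with hS
  let mk : A → Quotient S := Quotient.mk S
  letI : DecidableEq (Quotient S) := Classical.decEq _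
  letI : Fintype (Quotient S) := Fintype.ofSurjective mk (fun X => Quotient.exists_rep X)
  have hmk : ∀ a b : A, mk a = mk b ↔ (mreach N a b ∧ mreach N b a) := by
    intro a b
    constructor
    · intro h; exact Quotient.exact h
    · intro h; exact Quotient.sound h
  -- final classes
  let QF : Quotient S → Prop := fun X => ∀ b c : A, mk b = X → 0 < N c b → mk c = X
  have hQFclosed : ∀ X, QF X → ∀ (n : ℕ) (b c : A), mk b = X → 0 < (N ^ n) c b → mk c = X := by
    intro X hX n
    induction n with
    | zero =>
      intro b c hb h
      rw [pow_zero] at h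
      have : c = b := by
        by_contra hne
        rw [Matrix.one_apply_ne hne] at h; exact lt_irrefl 0 h
      rwa [this]
    | succ n ih =>
      intro b c hb h
      obtain ⟨x, hx1, hx2⟩ := pow_pos_decomp hN (h : 0 < (N ^ (n + 1)) c b)
      have hxX : mk x = X := hX b x hb (by rwa [pow_one] at hx2)
      exact ih x c hxX hx1
  -- the strict order on classes
  let qlt : Quotient S → Quotient S → Prop := fun X Y =>
    (X ≠ Y ∧ ∃ a b : A, mk a = X ∧ mk b = Y ∧ mreach N a b) ∨ (¬ QF X ∧ QF Y)
  have h_reach_nf : ∀ (X Y : Quotient S) (a b : A), X ≠ Y → mk a = X → mk b = Y →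
      mreach N a b → ¬ QF X := by
    intro X Y a b hne ha hb hr hQF
    obtain ⟨n, hn⟩ := hr
    exact hne (by rw [← hb, hQFclosed X hQF n a b ha hn])
  have qlt_nf : ∀ X Y, qlt X Y → ¬ QF X := by
    rintro X Y (⟨hne, a, b, ha, hb, hr⟩ | ⟨h1, h2⟩)
    · exact h_reach_nf X Y a b hne ha hb hr
    · exact h1
  have qlt_irrefl : ∀ X, ¬ qlt X X := by
    rintro X (⟨hne, -⟩ | ⟨h1, h2⟩)
    · exact hne rfl
    · exact h1 h2
  have qlt_trans : ∀ X Y Z, qlt X Y → qlt Y Z → qlt X Z := by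
    rintro X Y Z (⟨hne1, a, b, ha, hb, hr1⟩ | ⟨h1, h2⟩) hYZ
    · rcases hYZ with ⟨hne2, b', c, hb', hc, hr2⟩ | ⟨h1', h2'⟩
      · have hbb' : mreach N b b' := ((hmk b b').1 (hb.trans hb'.symm)).1
        have hac : mreach N a c := mreach_trans hN (mreach_trans hN hr1 hbb') hr2
        refine Or.inl ⟨?_, a, c, ha, hc, hac⟩
        intro hXZ
        apply hne1
        have hca : mreach N c a := ((hmk c a).1 (by rw [ha, hc, hXZ])).1
        have hba : mreach N b a := mreach_trans hN (mreach_trans hN hbb' hr2) hca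
        rw [← ha, ← hb]
        exact (hmk a b).2 ⟨hr1, hba⟩
      · exact Or.inr ⟨h_reach_nf X Y a b hne1 ha hb hr1, h2'⟩
    · rcases hYZ with h | h
      · exact absurd h2 (qlt_nf Y Z (Or.inl h))
      · exact absurd h2 h.1
  -- key function
  let tq : Quotient S → ℕ := fun X => (Fintype.equivFin (Quotient S) X : ℕ)
  let rk : Quotient S → ℕ := fun X => (Finset.univ.filter (fun Z => qlt Z X)).card
  let fB : ℕ := Fintype.card (Quotient S) + 1
  let fv : Quotient S → ℕ := fun X => if QF X then 1 else 0
  let key : Quotient S → ℕ := fun X => (fv X * fB + rk X) * fB + tq X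
  have htq_lt : ∀ X, tq X < fB := fun X =>
    Nat.lt_succ_of_lt ((Fintype.equivFin (Quotient S) X).is_lt)
  have key_mono : ∀ X Y, qlt X Y → key X < key Y := by
    intro X Y h
    have hrk : rk X < rk Y := by
      apply Finset.card_lt_card
      rw [Finset.ssubset_iff_of_subset]
      · refine ⟨X, ?_, ?_⟩
        · simp only [Finset.mem_filter, Finset.mem_univ, true_and]; exact h
        · simp only [Finset.mem_filter, Finset.mem_univ, true_and]; exact qlt_irrefl X
      · intro Z hZ
        simp only [Finset.mem_filter, Finset.mem_univ, true_and] at hZ ⊢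
        exact qlt_trans Z X Y hZ h
    have hfv : fv X ≤ fv Y := by
      have hfx : fv X = 0 := by simp only [fv, if_neg (qlt_nf X Y h)]
      omega
    show (fv X * fB + rk X) * fB + tq X < (fv Y * fB + rk Y) * fB + tq Y
    calc (fv X * fB + rk X) * fB + tq X < (fv X * fB + rk X + 1) * fB := by
          have e : (fv X * fB + rk X + 1) * fB = (fv X * fB + rk X) * fB + fB := by ring
          rw [e]
          exact Nat.add_lt_add_left (htq_lt X) _
      _ ≤ (fv Y * fB + rk Y) * fB := by
          apply Nat.mul_le_mul_right
          have : fv X * fB ≤ fv Y * fB := Nat.mul_le_mul_right fB hfv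
          omega
      _ ≤ (fv Y * fB + rk Y) * fB + tq Y := Nat.le_add_right _ _
  have key_inj : ∀ X Y, key X = key Y → X = Y := by
    intro X Y h
    have hX : key X % fB = tq X := by
      show ((fv X * fB + rk X) * fB + tq X) % fB = tq X
      rw [Nat.add_comm, Nat.add_mul_mod_self_right]
      exact Nat.mod_eq_of_lt (htq_lt X)
    have hY : key Y % fB = tq Y := by
      show ((fv Y * fB + rk Y) * fB + tq Y) % fB = tq Y
      rw [Nat.add_comm, Nat.add_mul_mod_self_right]
      exact Nat.mod_eq_of_lt (htq_lt Y)
    have : tq X = tq Y := by rw [← hX, ← hY, h]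
    exact (Fintype.equivFin (Quotient S)).injective (Fin.ext this)
  -- index
  let l := Fintype.card (Quotient S)
  have hlne : Nonempty (Quotient S) := ⟨mk (Classical.arbitrary A)⟩
  have hl0 : 0 < l := Fintype.card_pos
  let idxc : Quotient S → ℕ := fun X => (Finset.univ.filter (fun Z => key Z < key X)).card
  have hidx_lt : ∀ X : Quotient S, idxc X < l := by
    intro X
    have h1 : (Finset.univ.filter (fun Z => key Z < key X)) ⊂ Finset.univ := by
      rw [Finset.ssubset_iff_of_subset (Finset.subset_univ _)]
      exact ⟨X, Finset.mem_univ X, by simp⟩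
    have h2 := Finset.card_lt_card h1
    show (Finset.univ.filter (fun Z => key Z < key X)).card < l
    simpa [Finset.card_univ] using h2
  have idxc_of_key : ∀ X Y, key X < key Y → idxc X < idxc Y := by
    intro X Y hk
    show (Finset.univ.filter (fun Z => key Z < key X)).card <
      (Finset.univ.filter (fun Z => key Z < key Y)).card
    apply Finset.card_lt_card
    rw [Finset.ssubset_iff_of_subset]
    · exact ⟨X, by simpa using hk, by simp⟩
    · intro Z hZ
      simp only [Finset.mem_filter, Finset.mem_univ, true_and] at hZ ⊢
      omega
  have idxc_mono : ∀ X Y, qlt X Y → idxc X < idxc Y := fun X Y h =>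
    idxc_of_key X Y (key_mono X Y h)
  have idxc_inj : ∀ X Y, idxc X = idxc Y → X = Y := by
    intro X Y h
    by_contra hne
    have hk : key X ≠ key Y := fun hk => hne (key_inj X Y hk)
    rcases hk.lt_or_gt with hlt | hlt
    · exact absurd h (Nat.ne_of_lt (idxc_of_key X Y hlt))
    · exact absurd h (Nat.ne_of_gt (idxc_of_key Y X hlt))
  let idx : Quotient S → Fin l := fun X => ⟨idxc X, hidx_lt X⟩
  have hval : ∀ X, (idx X : ℕ) = idxc X := fun X => rfl
  have idx_inj : Function.Injective idx := by
    intro X Y h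
    exact idxc_inj X Y (by rw [← hval, ← hval, h])
  have idx_bij : Function.Bijective idx :=
    (Fintype.bijective_iff_injective_and_card idx).2 ⟨idx_inj, by simp [l]⟩
  let eidx : Quotient S ≃ Fin l := Equiv.ofBijective idx idx_bij
  have hcls : ∀ i : Fin l, idx (eidx.symm i) = i := fun i => eidx.apply_symm_apply i
  have hclsc : ∀ i : Fin l, idxc (eidx.symm i) = (i : ℕ) := by
    intro i
    rw [← hval]
    exact congrArg Fin.val (hcls i)
  -- the partition
  let part : A → Fin l := fun a => idx (mk a)
  have hpart_surj : Function.Surjective part := by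
    intro i
    obtain ⟨a, ha⟩ := Quotient.exists_rep (eidx.symm i)
    refine ⟨a, ?_⟩
    show idx (mk a) = i
    rw [show mk a = eidx.symm i from ha]
    exact hcls i
  have hpart_iff : ∀ a b : A, part a = part b ↔ mk a = mk b := by
    intro a b
    exact ⟨fun h => idx_inj h, fun h => congrArg idx h⟩
  -- q
  let q := Finset.sup (Finset.univ.filter (fun X => ¬ QF X)) (fun X => idxc X + 1)
  have hq2 : ∀ X, ¬ QF X → idxc X < q := by
    intro X hX
    have hmem : X ∈ Finset.univ.filter (fun X => ¬ QF X) :=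
      Finset.mem_filter.2 ⟨Finset.mem_univ X, hX⟩
    have : idxc X + 1 ≤ q := Finset.le_sup (f := fun X => idxc X + 1) hmem
    omega
  have hq1 : ∀ i : Fin l, (i : ℕ) < q → ¬ QF (eidx.symm i) := by
    intro i hi hQF
    rw [Finset.lt_sup_iff] at hi
    obtain ⟨X, hXmem, hX⟩ := hi
    simp only [Finset.mem_filter, Finset.mem_univ, true_and] at hXmem
    have h1 := idxc_mono X (eidx.symm i) (Or.inr ⟨hXmem, hQF⟩)
    rw [hclsc i] at h1
    omega
  have hfinal_last : QF (eidx.symm ⟨l - 1, by omega⟩) := by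
    by_contra hnf
    have hnf' : ¬ ∀ b c : A, mk b = eidx.symm ⟨l - 1, by omega⟩ → 0 < N c b →
        mk c = eidx.symm ⟨l - 1, by omega⟩ := hnf
    push_neg at hnf'
    obtain ⟨b, c, hb, hcb, hc⟩ := hnf'
    have h1 := idxc_mono (eidx.symm ⟨l - 1, by omega⟩) (mk c)
      (Or.inl ⟨Ne.symm hc, b, c, hb, rfl, mreach_single hcb⟩)
    rw [hclsc] at h1
    have h2 := hidx_lt (mk c)
    have h3 : ((⟨l - 1, by omega⟩ : Fin l) : ℕ) = l - 1 := rfl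
    rw [h3] at h1
    omega
  have hql : q < l := by
    have hsup : Finset.sup (Finset.univ.filter (fun X => ¬ QF X)) (fun X => idxc X + 1) < l := by
      rw [Finset.sup_lt_iff hl0]
      intro X hX
      simp only [Finset.mem_filter, Finset.mem_univ, true_and] at hX
      have h1 := idxc_mono X _ (Or.inr ⟨hX, hfinal_last⟩)
      rw [hclsc] at h1
      have h3 : ((⟨l - 1, by omega⟩ : Fin l) : ℕ) = l - 1 := rfl
      rw [h3] at h1
      omega
    exact hsup
  -- primitivity of classes with an internal edge
  have hprim : ∀ i : Fin l, (∃ x y : A, part x = i ∧ part y = i ∧ 0 < N x y) →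
      IsPrimitiveMatrix (subMatrix N (fun c => part c = i)) := by
    rintro i ⟨x0, y0, hx0, hy0, hxy⟩
    apply primitive_block N (fun c => part c = i) hN
    · intro x y hx hy
      exact ((hmk y x).1 ((hpart_iff y x).1 (hy.trans hx.symm))).1
    · intro x y c hx hy h1 h2
      have hxy' : mreach N c y :=
        mreach_trans hN h2 ((hmk x y).1 ((hpart_iff x y).1 (hx.trans hy.symm))).1
      have hcy : mk c = mk y := (hmk c y).2 ⟨hxy', h1⟩
      show idx (mk c) = i
      rw [hcy]
      exact hy
    · intro z hz
      have hzy : mreach N z y0 := ((hmk z y0).1 ((hpart_iff z y0).1 (hz.trans hy0.symm))).1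
      have hxz : mreach N x0 z := ((hmk x0 z).1 ((hpart_iff x0 z).1 (hx0.trans hz.symm))).1
      obtain ⟨n2, hn2⟩ := hzy
      obtain ⟨n3, hn3⟩ := hxz
      have e1 : 0 < (N ^ (1 + n2)) x0 z :=
        pow_pos_trans hN (by rwa [pow_one]) hn2
      have e2 : 0 < (N ^ (n3 + (1 + n2))) z z := pow_pos_trans hN hn3 e1
      exact hloop z ⟨n3 + (1 + n2), by omega, e2⟩
  refine ⟨q, l, part, hql, hpart_surj, ?_, ?_, ?_, ?_⟩
  · -- condition (i)
    intro a b hab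
    have hpos : 0 < N a b := (hN a b).lt_of_ne (Ne.symm hab)
    by_cases hq : mk a = mk b
    · exact Or.inl ((hpart_iff a b).2 hq)
    · refine Or.inr ⟨?_, ?_⟩
      · have hnf : ¬ QF (mk b) := by
          intro hQF
          exact hq ((hQF b a rfl hpos).symm ▸ rfl)
        show idxc (mk b) < q
        exact hq2 (mk b) hnf
      · show idxc (mk b) < idxc (mk a)
        exact idxc_mono (mk b) (mk a)
          (Or.inl ⟨fun h => hq h.symm, b, a, rfl, rfl, mreach_single hpos⟩)
  · -- condition (ii) for i < q
    intro i hi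
    by_cases hedge : ∃ x y : A, part x = i ∧ part y = i ∧ 0 < N x y
    · exact Or.inr (hprim i hedge)
    · left
      intro a b
      exact le_antisymm (not_lt.1 fun hp => hedge ⟨a.1, b.1, a.2, b.2, hp⟩) (hN a.1 b.1)
  · -- condition (ii) for i ≥ q
    intro i hi
    have hQF : QF (eidx.symm i) := by
      by_contra hnf
      have h1 := hq2 _ hnf
      rw [hclsc i] at h1
      omega
    obtain ⟨b, hb⟩ := hpart_surj i
    obtain ⟨a, ha⟩ := hcol b
    have hbX : mk b = eidx.symm i := idx_inj (hb.trans (hcls i).symm)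
    have haX : mk a = eidx.symm i := hQF b a hbX ha
    refine hprim i ⟨a, b, ?_, hb, ha⟩
    show idx (mk a) = i
    rw [haX]
    exact hcls i
  · -- condition (iii)
    intro i hi
    have hnf := hq1 i hi
    have hnf' : ¬ ∀ b c : A, mk b = eidx.symm i → 0 < N c b → mk c = eidx.symm i := hnf
    push_neg at hnf'
    obtain ⟨b, c, hb, hcb, hc⟩ := hnf'
    refine ⟨part c, ?_, c, b, rfl, ?_, hcb.ne'⟩
    · show (i : ℕ) < idxc (mk c)
      have h1 := idxc_mono (eidx.symm i) (mk c)
        (Or.inl ⟨Ne.symm hc, b, c, hb, rfl, mreach_single hcb⟩)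
      rw [hclsc i] at h1
      exact h1
    · show idx (mk b) = i
      rw [hb]
      exact hcls i

end Aux

/-- decomposition of a non-negative matrix into primitive components. -/
theorem stmt13 {A : Type} [Fintype A] [DecidableEq A] [Nonempty A] (M : Matrix A A ℝ)
    (hnn : ∀ i j : A, 0 ≤ M i j) (hcol : ∀ j : A, ∃ i : A, M i j ≠ 0) :
    ∃ (p q l : ℕ) (part : A → Fin l), 0 < p ∧ q < l ∧ Function.Surjective part ∧
      (∀ a b : A, (M ^ p) a b ≠ 0 →
        part a = part b ∨ ((part b : ℕ) < q ∧ (part b : ℕ) < (part a : ℕ))) ∧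
      (∀ i : Fin l, (i : ℕ) < q →
        (∀ a b : {c : A // part c = i}, (M ^ p) a.1 b.1 = 0) ∨
          IsPrimitiveMatrix (subMatrix (M ^ p) (fun c => part c = i))) ∧
      (∀ i : Fin l, q ≤ (i : ℕ) →
          IsPrimitiveMatrix (subMatrix (M ^ p) (fun c => part c = i))) ∧
      (∀ i : Fin l, (i : ℕ) < q → ∃ j : Fin l, (i : ℕ) < (j : ℕ) ∧
        ∃ a b : A, part a = j ∧ part b = i ∧ (M ^ p) a b ≠ 0) := by
  classical
  let n₀ : A → ℕ := fun a => if h : ∃ m, 0 < m ∧ 0 < (M ^ m) a a then h.choose else 1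
  have hn₀pos : ∀ a, 0 < n₀ a := by
    intro a
    have e : n₀ a = if h : ∃ m, 0 < m ∧ 0 < (M ^ m) a a then h.choose else 1 := rfl
    by_cases h : ∃ m, 0 < m ∧ 0 < (M ^ m) a a
    · rw [e, dif_pos h]; exact h.choose_spec.1
    · rw [e, dif_neg h]; exact one_pos
  have hn₀spec : ∀ a, (∃ m, 0 < m ∧ 0 < (M ^ m) a a) → 0 < (M ^ (n₀ a)) a a := by
    intro a h
    have e : n₀ a = if h : ∃ m, 0 < m ∧ 0 < (M ^ m) a a then h.choose else 1 := rfl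
    rw [e, dif_pos h]
    exact h.choose_spec.2
  set p : ℕ := ∏ a : A, n₀ a with hpdef
  have hp : 0 < p := Finset.prod_pos (fun a _ => hn₀pos a)
  have hP : ∀ a, (∃ m, 0 < m ∧ 0 < (M ^ m) a a) → 0 < (M ^ p) a a := by
    intro a ha
    obtain ⟨k, hk⟩ := Finset.dvd_prod_of_mem n₀ (Finset.mem_univ a)
    rw [show p = n₀ a * k from hk]
    exact diag_pow_pos hnn (hn₀spec a ha) k
  have hNnn : ∀ i j, 0 ≤ (M ^ p) i j := pow_apply_nonneg M hnn p
  have hNcol : ∀ n : ℕ, ∀ b, ∃ a, 0 < (M ^ n) a b := by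
    intro n
    induction n with
    | zero =>
      intro b
      exact ⟨b, by rw [pow_zero, Matrix.one_apply_eq]; norm_num⟩
    | succ n ih =>
      intro b
      obtain ⟨c, hc⟩ := hcol b
      have hc' : 0 < M c b := (hnn c b).lt_of_ne (Ne.symm hc)
      obtain ⟨a, ha⟩ := ih c
      exact ⟨a, pow_pos_trans hnn ha (by rwa [pow_one])⟩
  have hNloop : ∀ a, (∃ n, 0 < n ∧ 0 < ((M ^ p) ^ n) a a) → 0 < (M ^ p) a a := by
    rintro a ⟨n, hn, h⟩
    rw [← pow_mul] at h
    exact hP a ⟨p * n, Nat.mul_pos hp hn, h⟩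
  obtain ⟨q, l, part, h1, h2, h3, h4, h5, h6⟩ :=
    structure_lemma (M ^ p) hNnn (hNcol p) hNloop
  exact ⟨p, q, l, part, hp, h1, h2, h3, h4, h5, h6⟩


end Cobham
end

section
/- Let σ be a substitution on a finite alphabet A satisfying condition (C) with partition A₁, …, A_l and integer q, let x be a proper fixed point of σ, and let Ā = A_i for some i with q+1 ≤ i ≤ l (so that the restriction of σ to Ā is a main sub-substitution of σ). Then for every n ∈ ℕ and every letter a ∈ Ā, the word σ^n(a) has infinitely many occurrences in x. -/
open Filter Topology
open scoped Classical

namespace Cobham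

/-!
If `a` lies in a main component `A_i`, condition (C1) keeps every letter of `σᵏ(a)` in `A_i`,
and by (C2) every letter of `A_i` has `a` in its image, so `σᵏ⁺¹(a)` contains at least
`|σᵏ(a)| → ∞` copies of `a`. Since `a` occurs in the fixed point `x`, so does each `σᵏ⁺¹(a)`,
hence `a` occurs in `x` infinitely often. Finally, `σ` is non-erasing, so an occurrence of a word
`w` at position `p` in `x` yields an occurrence of `σⁿ(w)` at a position `≥ p`.
-/

section Words

variable {A : Type}

lemma applyWord_append (σ : A → List A) (u v : List A) :
    applyWord σ (u ++ v) = applyWord σ u ++ applyWord σ v :=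
  List.flatMap_append

lemma iterWord_succ (σ : A → List A) (n : ℕ) (w : List A) :
    iterWord σ (n + 1) w = iterWord σ n (applyWord σ w) :=
  Function.iterate_succ_apply _ _ _

lemma iterWord_succ' (σ : A → List A) (n : ℕ) (w : List A) :
    iterWord σ (n + 1) w = applyWord σ (iterWord σ n w) :=
  Function.iterate_succ_apply' _ _ _

lemma iterWord_nil (σ : A → List A) (n : ℕ) : iterWord σ n [] = [] :=
  Function.iterate_fixed rfl n

lemma iterWord_append (σ : A → List A) (n : ℕ) (u v : List A) :
    iterWord σ n (u ++ v) = iterWord σ n u ++ iterWord σ n v := by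
  induction n generalizing u v with
  | zero => rfl
  | succ n ih => rw [iterWord_succ, iterWord_succ, iterWord_succ, applyWord_append, ih]

lemma IsSubstitution.ne_nil {σ : A → List A} (hσ : IsSubstitution σ) (b : A) : σ b ≠ [] := by
  intro hb
  have hvanish : ∀ n, lengthIter σ (n + 1) b = 0 := fun n => by
    simp [lengthIter, iterWord_succ, applyWord, hb, iterWord_nil]
  obtain ⟨n, hn⟩ := ((hσ b).eventually_ge_atTop 1).exists_forall_of_atTop
  have := hn (n + 1) n.le_succ
  rw [hvanish] at this
  omega

lemma IsSubstitution.length_le_applyWord {σ : A → List A} (hσ : IsSubstitution σ)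
    (w : List A) : w.length ≤ (applyWord σ w).length := by
  induction w with
  | nil => simp [applyWord]
  | cons b w ih =>
    have hb : 1 ≤ (σ b).length := List.length_pos_iff.mpr (hσ.ne_nil b)
    simp only [applyWord, List.flatMap_cons, List.length_append, List.length_cons] at ih ⊢
    omega

lemma IsSubstitution.length_le_iterWord {σ : A → List A} (hσ : IsSubstitution σ) (n : ℕ)
    (w : List A) : w.length ≤ (iterWord σ n w).length := by
  induction n generalizing w with
  | zero => rfl
  | succ n ih => exact (hσ.length_le_applyWord w).trans (iterWord_succ σ n w ▸ ih _)

lemma mem_iterWord_of_forall_mem_imp {σ : A → List A} {P : A → Prop}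
    (hP : ∀ b c, P b → c ∈ σ b → P c) (n : ℕ) {w : List A} (hw : ∀ b ∈ w, P b) :
    ∀ c ∈ iterWord σ n w, P c := by
  induction n with
  | zero => exact hw
  | succ n ih =>
    intro c hc
    rw [iterWord_succ', applyWord, List.mem_flatMap] at hc
    obtain ⟨b, hb, hcb⟩ := hc
    exact hP b c (ih b hb) hcb

lemma length_le_count_applyWord [DecidableEq A] (σ : A → List A) (a : A) {w : List A}
    (h : ∀ b ∈ w, a ∈ σ b) : w.length ≤ (applyWord σ w).count a := by
  induction w with
  | nil => simp [applyWord]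
  | cons b w ih =>
    have hb : 0 < (σ b).count a := List.count_pos_iff.mpr (h b List.mem_cons_self)
    have hw := ih fun c hc => h c (List.mem_cons_of_mem b hc)
    simp only [applyWord, List.flatMap_cons, List.count_append, List.length_cons] at hw ⊢
    omega

lemma exists_le_getElem_eq_of_lt_count {α : Type*} [DecidableEq α] {u : List α} {a : α}
    {N : ℕ} (h : N < u.count a) : ∃ (j : ℕ) (hj : j < u.length), N ≤ j ∧ u[j] = a := by
  have hsplit : u.count a = (u.take N).count a + (u.drop N).count a := by
    rw [← List.count_append, List.take_append_drop]
  have htake : (u.take N).count a ≤ N :=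
    List.count_le_length.trans (List.length_take_le _ _)
  have hdrop : a ∈ u.drop N := List.count_pos_iff.mp (by omega)
  obtain ⟨m, hm, hma⟩ := List.mem_iff_getElem.mp hdrop
  rw [List.getElem_drop] at hma
  exact ⟨N + m, by simp only [List.length_drop] at hm; omega, by omega, hma⟩

end Words

section Occurrences

variable {A : Type}

lemma isPrefixOfSeq_seqTake (x : ℕ → A) (n : ℕ) : IsPrefixOfSeq (seqTake x n) x :=
  fun i => by
  rw [List.get_eq_getElem]
  exact List.getElem_ofFn ..

lemma IsPrefixOfSeq.eq_seqTake {w : List A} {x : ℕ → A} (h : IsPrefixOfSeq w x) :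
    w = seqTake x w.length :=
  List.ext_get (by simp [seqTake]) fun i h₁ _ => by simpa [seqTake] using h ⟨i, h₁⟩

lemma IsFixedPoint.isPrefixOfSeq_iterWord {σ : A → List A} {x : ℕ → A} (hx : IsFixedPoint σ x)
    (k m : ℕ) : IsPrefixOfSeq (iterWord σ k (seqTake x m)) x := by
  induction k generalizing m with
  | zero => exact isPrefixOfSeq_seqTake x m
  | succ k ih =>
    rw [iterWord_succ, (hx m).eq_seqTake]
    exact ih _

lemma IsPrefixOfSeq.occursAt_of_append {s v : List A} {x : ℕ → A}
    (h : IsPrefixOfSeq (s ++ v) x) : OccursAt v x s.length := by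
  intro j
  have hj : s.length + j < (s ++ v).length := by simp
  simpa [List.getElem_append_right] using h ⟨s.length + j, hj⟩

lemma OccursAt.seqTake_add {w : List A} {x : ℕ → A} {p : ℕ} (h : OccursAt w x p) :
    seqTake x (p + w.length) = seqTake x p ++ w := by
  rw [seqTake, List.ofFn_add]
  congr 1
  exact List.ext_get (by simp) fun j _ hj => by simpa using (h ⟨j, hj⟩).symm

lemma occursAt_singleton_iff {a : A} {x : ℕ → A} {i : ℕ} : OccursAt [a] x i ↔ x i = a := by
  simp [OccursAt, eq_comm]

variable {σ : A → List A} {x : ℕ → A}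

lemma IsFixedPoint.exists_occursAt_iterWord (hσ : IsSubstitution σ) (hx : IsFixedPoint σ x)
    {w : List A} {p : ℕ} (hw : OccursAt w x p) (n : ℕ) :
    ∃ i, p ≤ i ∧ OccursAt (iterWord σ n w) x i := by
  have hpre := hx.isPrefixOfSeq_iterWord n (p + w.length)
  rw [hw.seqTake_add, iterWord_append] at hpre
  refine ⟨_, ?_, hpre.occursAt_of_append⟩
  simpa [seqTake] using hσ.length_le_iterWord n (seqTake x p)

lemma IsFixedPoint.occursInfinitely_iterWord (hσ : IsSubstitution σ) (hx : IsFixedPoint σ x)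
    {w : List A} (hw : OccursInfinitely w x) (n : ℕ) :
    OccursInfinitely (iterWord σ n w) x := fun N => by
  obtain ⟨p, hNp, hp⟩ := hw N
  obtain ⟨i, hpi, hi⟩ := hx.exists_occursAt_iterWord hσ hp n
  exact ⟨i, hNp.trans hpi, hi⟩

lemma IsFixedPoint.occursInfinitely_singleton [DecidableEq A] (hσ : IsSubstitution σ)
    (hx : IsFixedPoint σ x) {a : A} (ha : ∃ p, x p = a)
    (hcount : ∀ N, ∃ k, N < (iterWord σ k [a]).count a) : OccursInfinitely [a] x := fun N => by
  obtain ⟨p, hp⟩ := ha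
  obtain ⟨k, hk⟩ := hcount N
  obtain ⟨i, -, hi⟩ := hx.exists_occursAt_iterWord hσ (occursAt_singleton_iff.mpr hp) k
  obtain ⟨j, hj, hNj, hja⟩ := exists_le_getElem_eq_of_lt_count hk
  refine ⟨i + j, by omega, occursAt_singleton_iff.mpr ?_⟩
  simpa [hja] using (hi ⟨j, hj⟩).symm

end Occurrences

section ConditionC

variable {A : Type} [DecidableEq A] {σ : A → List A} {l q : ℕ} {part : A → Fin l}

lemma SatisfiesC.part_eq_of_mem_iterWord (hC : SatisfiesC σ l q part) {i : Fin l}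
    (hi : q ≤ (i : ℕ)) {a : A} (ha : part a = i) (k : ℕ) :
    ∀ b ∈ iterWord σ k [a], part b = i := by
  obtain ⟨-, -, hclosed, -⟩ := hC
  refine mem_iterWord_of_forall_mem_imp (fun b c hb hcb => ?_) k (by simpa using ha)
  rcases hclosed c b hcb with h | h
  · rw [h, hb]
  · rw [hb] at h; omega

lemma SatisfiesC.exists_lt_count_iterWord (hσ : IsSubstitution σ) (hC : SatisfiesC σ l q part)
    {i : Fin l} (hi : q ≤ (i : ℕ)) {a : A} (ha : part a = i) (N : ℕ) :
    ∃ k, N < (iterWord σ k [a]).count a := by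
  obtain ⟨k, hk⟩ := ((hσ a).eventually_gt_atTop N).exists
  have hblock := hC.part_eq_of_mem_iterWord hi ha k
  obtain ⟨-, -, -, -, hmain, -⟩ := hC
  have hpos : ∀ b ∈ iterWord σ k [a], a ∈ σ b := fun b hb =>
    List.count_pos_iff.mp (hmain i hi a b ha (hblock b hb))
  refine ⟨k + 1, hk.trans_le ?_⟩
  rw [iterWord_succ']
  exact length_le_count_applyWord σ a hpos

end ConditionC

theorem stmt14_general {A : Type} [DecidableEq A] (σ : A → List A)
    (hσ : IsSubstitution σ)
    (l q : ℕ) (part : A → Fin l) (hC : SatisfiesC σ l q part)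
    (x : ℕ → A) (hx : IsProperFixedPoint σ x)
    (i : Fin l) (hi : q ≤ (i : ℕ)) :
    ∀ (n : ℕ) (a : A), part a = i → OccursInfinitely (iterWord σ n [a]) x := by
  intro n a ha
  have hletter : OccursInfinitely [a] x :=
    hx.1.occursInfinitely_singleton hσ (hx.2 a) (hC.exists_lt_count_iterWord hσ hi ha)
  exact hx.1.occursInfinitely_iterWord hσ hletter n

/-- words `σⁿ(a)`, for `a` in a principal primitive component, occur
infinitely often in a proper fixed point. -/
theorem stmt14 {A : Type} [Fintype A] [DecidableEq A] (σ : A → List A)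
    (hσ : IsSubstitution σ)
    (l q : ℕ) (part : A → Fin l) (hC : SatisfiesC σ l q part)
    (x : ℕ → A) (hx : IsProperFixedPoint σ x)
    (i : Fin l) (hi : q ≤ (i : ℕ)) :
    ∀ (n : ℕ) (a : A), part a = i → OccursInfinitely (iterWord σ n [a]) x :=
  stmt14_general σ hσ l q part hC x hx i hi

end Cobham
end

section
/- Let σ be a substitution on a finite alphabet A in which every letter has a growth type. If a letter a ∈ A has growth type (i, θ), then there exists a letter b of growth type (i, θ) having an occurrence in the word σ(a). -/
/-!
Compare everything with `g n = n ^ i * θ ^ n`, which is `Θ` of both `|σⁿ(a)|` and `|σⁿ⁺¹(a)|`,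
and use `|σⁿ⁺¹(a)| = ∑_{b ∈ σ(a)} |σⁿ(b)|`. The rates `n ^ d * θ' ^ n` are strictly ordered by
little-o, lexicographically in `(θ', d)`. No letter `b` of `σ(a)` can grow strictly faster than
`g`, because `|σⁿ(b)| ≤ |σⁿ⁺¹(a)|`; if all of them grew strictly slower, the sum would be `o(g)`.
-/

open Filter Topology
open scoped Classical

namespace Cobham

open Asymptotics

section Words

variable {A : Type*} (σ : A → List A)

lemma iterWord_eq_flatMap (n : ℕ) (w : List A) :
    iterWord σ n w = w.flatMap fun b => iterWord σ n [b] := by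
  induction n with
  | zero => exact (List.flatMap_singleton' w).symm
  | succ n ih =>
    have step : ∀ w, iterWord σ (n + 1) w = (iterWord σ n w).flatMap σ :=
      fun w => Function.iterate_succ_apply' _ _ _
    rw [step, ih, List.flatMap_assoc]
    simp only [step]

lemma lengthIter_succ (n : ℕ) (a : A) :
    lengthIter σ (n + 1) a = ((σ a).map (lengthIter σ n)).sum := by
  have : iterWord σ (n + 1) [a] = iterWord σ n (σ a) := by
    simp [iterWord, applyWord, Function.iterate_succ_apply]
  rw [lengthIter, this, iterWord_eq_flatMap, List.length_flatMap]
  rfl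

lemma lengthIter_le_lengthIter_succ_of_mem {a b : A} (hb : b ∈ σ a) (n : ℕ) :
    lengthIter σ n b ≤ lengthIter σ (n + 1) a := by
  rw [lengthIter_succ]
  exact List.le_sum_of_mem (List.mem_map_of_mem hb)

end Words

lemma _root_.Asymptotics.IsLittleO.list_sum {α ι E F : Type*} [NormedAddCommGroup E]
    [SeminormedAddCommGroup F]
    {l : Filter α} {f : ι → α → E} {g : α → F} {L : List ι} (h : ∀ i ∈ L, f i =o[l] g) :
    (fun x => (L.map (f · x)).sum) =o[l] g := by
  induction L with
  | nil => simpa using isLittleO_zero g l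
  | cons i L ih =>
    simp only [List.map_cons, List.sum_cons]
    exact (h i List.mem_cons_self).add (ih fun j hj => h j (List.mem_cons_of_mem i hj))

noncomputable def growthRate (d : ℕ) (θ : ℝ) (n : ℕ) : ℝ := (n : ℝ) ^ d * θ ^ n

lemma growthRate_not_isLittleO_self {d : ℕ} {θ : ℝ} (hθ : θ ≠ 0) :
    ¬ growthRate d θ =o[atTop] growthRate d θ := by
  refine isLittleO_irrefl (Eventually.frequently ?_)
  filter_upwards [eventually_ge_atTop 1] with n hn
  have : (n : ℝ) ≠ 0 := by positivity
  simp [growthRate, this, hθ]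

lemma growthRate_isLittleO_of_lt {d d' : ℕ} {θ θ' : ℝ} (hθ' : 0 ≤ θ')
    (h : toLex (θ', d') < toLex (θ, d)) : growthRate d' θ' =o[atTop] growthRate d θ := by
  rcases Prod.Lex.lt_iff.1 h with hθ | ⟨rfl, hd⟩
  · have hpow : (fun n : ℕ => θ ^ n) =O[atTop] growthRate d θ := by
      refine IsBigO.of_bound 1 ?_
      filter_upwards [eventually_ge_atTop 1] with n hn
      have : (1 : ℝ) ≤ (n : ℝ) ^ d := one_le_pow₀ (by exact_mod_cast hn)
      rw [growthRate, norm_mul, one_mul]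
      exact le_mul_of_one_le_left (norm_nonneg _) (by simpa using this)
    exact (isLittleO_pow_const_mul_const_pow_const_pow_of_norm_lt d'
      (by rwa [Real.norm_of_nonneg hθ'])).trans_isBigO hpow
  · exact ((isLittleO_pow_pow_atTop_of_lt hd).comp_tendsto tendsto_natCast_atTop_atTop).mul_isBigO
      (isBigO_refl _ _)

lemma growthRate_succ_isTheta {d : ℕ} {θ : ℝ} (hθ : 0 < θ) :
    (fun n => growthRate d θ (n + 1)) =Θ[atTop] growthRate d θ := by
  refine ⟨IsBigO.of_bound (2 ^ d * θ) ?_, IsBigO.of_bound θ⁻¹ ?_⟩ <;>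
    filter_upwards [eventually_ge_atTop 1] with n hn <;>
    simp only [growthRate, Nat.cast_add, Nat.cast_one] <;>
    rw [Real.norm_of_nonneg (by positivity), Real.norm_of_nonneg (by positivity)]
  · have : ((n : ℝ) + 1) ^ d ≤ 2 ^ d * (n : ℝ) ^ d := by
      rw [← mul_pow]
      exact pow_le_pow_left₀ (by positivity) (by linarith [(Nat.one_le_cast.2 hn : (1 : ℝ) ≤ n)]) d
    calc ((n : ℝ) + 1) ^ d * θ ^ (n + 1) ≤ 2 ^ d * (n : ℝ) ^ d * θ ^ (n + 1) := by gcongr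
      _ = 2 ^ d * θ * ((n : ℝ) ^ d * θ ^ n) := by ring
  · calc (n : ℝ) ^ d * θ ^ n ≤ ((n : ℝ) + 1) ^ d * θ ^ n := by gcongr; linarith
      _ = θ⁻¹ * (((n : ℝ) + 1) ^ d * θ ^ (n + 1)) := by field_simp; ring

section GrowthType

variable {A : Type*} {σ : A → List A} {a : A} {d : ℕ} {θ : ℝ}

lemma HasGrowthType.one_le (h : HasGrowthType σ a d θ) : 1 ≤ θ :=
  h.choose_spec.2.1

lemma HasGrowthType.isTheta (h : HasGrowthType σ a d θ) :
    (fun n => (lengthIter σ n a : ℝ)) =Θ[atTop] growthRate d θ := by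
  obtain ⟨c, hc, -, hlim⟩ := h
  have hc_mul : (fun n : ℕ => c * (n : ℝ) ^ d * θ ^ n) =Θ[atTop] growthRate d θ := by
    simpa only [growthRate, mul_assoc] using
      (isTheta_const_mul_left hc.ne').2 (isTheta_refl (growthRate d θ) atTop)
  exact (isEquivalent_of_tendsto_one hlim).isTheta.trans hc_mul

lemma HasGrowthType.isTheta_succ (h : HasGrowthType σ a d θ) :
    (fun n => (lengthIter σ (n + 1) a : ℝ)) =Θ[atTop] growthRate d θ := by
  have hΘ := h.isTheta
  exact IsTheta.trans ⟨hΘ.1.comp_tendsto (tendsto_add_atTop_nat 1),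
    hΘ.2.comp_tendsto (tendsto_add_atTop_nat 1)⟩
    (growthRate_succ_isTheta (zero_lt_one.trans_le h.one_le))

end GrowthType

theorem stmt18_general {A : Type} (σ : A → List A)
    (hall : ∀ b : A, ∃ (d : ℕ) (θ' : ℝ), HasGrowthType σ b d θ')
    (a : A) (i : ℕ) (θ : ℝ) (ha : HasGrowthType σ a i θ) :
    ∃ b : A, b ∈ σ a ∧ HasGrowthType σ b i θ := by
  by_contra! hne
  have hθ : 0 < θ := zero_lt_one.trans_le ha.one_le
  have hsucc := ha.isTheta_succ
  have hsmall : ∀ b ∈ σ a, (fun n => (lengthIter σ n b : ℝ)) =o[atTop] growthRate i θ := by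
    intro b hb
    obtain ⟨d, θ', hb'⟩ := hall b
    have hθ' : 0 < θ' := zero_lt_one.trans_le hb'.one_le
    rcases lt_trichotomy (toLex (θ', d)) (toLex (θ, i)) with hlt | heq | hgt
    · exact hb'.isTheta.trans_isLittleO (growthRate_isLittleO_of_lt hθ'.le hlt)
    · obtain ⟨rfl, rfl⟩ := Prod.ext_iff.1 (toLex.injective heq)
      exact absurd hb' (hne b hb)
    · refine absurd ?_ (growthRate_not_isLittleO_self (d := d) hθ'.ne')
      calc growthRate d θ' =O[atTop] fun n => (lengthIter σ n b : ℝ) := hb'.isTheta.symm.1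
        _ =O[atTop] fun n => (lengthIter σ (n + 1) a : ℝ) := IsBigO.of_bound 1 <| .of_forall
            fun n => by simpa using lengthIter_le_lengthIter_succ_of_mem σ hb n
        _ =O[atTop] growthRate i θ := hsucc.1
        _ =o[atTop] growthRate d θ' := growthRate_isLittleO_of_lt hθ.le hgt
  have hsum : (fun n => (lengthIter σ (n + 1) a : ℝ)) =o[atTop] growthRate i θ := by
    simpa [lengthIter_succ, Function.comp_def] using IsLittleO.list_sum hsmall
  exact growthRate_not_isLittleO_self hθ.ne' (hsucc.symm.trans_isLittleO hsum)

/-- a letter of growth type `(i, θ)` produces a letter of the same growth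
type in its image. -/
theorem stmt18 {A : Type} [Fintype A] (σ : A → List A) (hσ : IsSubstitution σ)
    (hall : ∀ b : A, ∃ (d : ℕ) (θ' : ℝ), HasGrowthType σ b d θ')
    (a : A) (i : ℕ) (θ : ℝ) (ha : HasGrowthType σ a i θ) :
    ∃ b : A, b ∈ σ a ∧ HasGrowthType σ b i θ :=
  stmt18_general σ hall a i θ ha

end Cobham
end
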